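/- For every pair of natural numbers a, b, the rational function F_{a,b} lies in the image of the polynomial ring ℚ[x₁,x₂] inside its fraction field K; that is, when expanded out, F_{a,b} is a polynomial in x₁ and x₂. -/

import Mathlib

open MvPolynomial

set_option maxHeartbeats 1000000
set_option synthInstance.maxHeartbeats 400000

noncomputable section

/-- The polynomial ring `ℚ[x₁,x₂]`. -/
abbrev R : Type := MvPolynomial (Fin 2) ℚ

/-- The field of rational functions `K = ℚ(x₁,x₂)`. -/
abbrev K : Type := FractionRing R

/-- The image of `x₁` in `K`. -/
def x₁ : K := algebraMap R K (X 0)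

/-- The image of `x₂` in `K`. -/
def x₂ : K := algebraMap R K (X 1)

/-- The localisation expression
`F_{a,b} = (x₁x₂)^a(x₁²+x₂²)^b/(x₁x₂) + (x₁²−x₁x₂)^a(x₁²+(x₂−x₁)²)^b/(x₁²−x₁x₂)
  + (x₂²−x₁x₂)^a(x₂²+(x₁−x₂)²)^b/(x₂²−x₁x₂)` in `K`. -/
def F (a b : ℕ) : K :=
  (x₁ * x₂) ^ a * (x₁ ^ 2 + x₂ ^ 2) ^ b / (x₁ * x₂)
    + (x₁ ^ 2 - x₁ * x₂) ^ a * (x₁ ^ 2 + (x₂ - x₁) ^ 2) ^ b / (x₁ ^ 2 - x₁ * x₂)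
    + (x₂ ^ 2 - x₁ * x₂) ^ a * (x₂ ^ 2 + (x₁ - x₂) ^ 2) ^ b / (x₂ ^ 2 - x₁ * x₂)

lemma primeX0 : Prime (X 0 : R) := by
  rw [← MulEquiv.prime_iff (e := (MvPolynomial.finSuccEquiv ℚ 1).toRingEquiv.toMulEquiv)]
  have : (MvPolynomial.finSuccEquiv ℚ 1).toRingEquiv.toMulEquiv (X 0) = Polynomial.X :=
    finSuccEquiv_X_zero
  rw [this]; exact Polynomial.prime_X

lemma primeX1 : Prime (X 1 : R) := by
  rw [← MulEquiv.prime_iff (e := (renameEquiv ℚ (Equiv.swap (0 : Fin 2) 1)).toRingEquiv.toMulEquiv)]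
  have : (renameEquiv ℚ (Equiv.swap (0 : Fin 2) 1)).toRingEquiv.toMulEquiv (X 1)
      = (X 0 : R) := by
    show (renameEquiv ℚ (Equiv.swap (0 : Fin 2) 1)) (X 1) = _
    simp [renameEquiv_apply, rename_X]
  rw [this]; exact primeX0

lemma primeX01 : Prime (X 0 - X 1 : R) := by
  rw [← MulEquiv.prime_iff (e := (MvPolynomial.finSuccEquiv ℚ 1).toRingEquiv.toMulEquiv)]
  have : (MvPolynomial.finSuccEquiv ℚ 1).toRingEquiv.toMulEquiv (X 0 - X 1)
      = Polynomial.X - Polynomial.C (X 0) := by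
    show (MvPolynomial.finSuccEquiv ℚ 1) (X 0 - X 1) = _
    rw [map_sub, finSuccEquiv_X_zero]
    congr 1
    rw [show (1 : Fin 2) = Fin.succ 0 from rfl, finSuccEquiv_X_succ]
  rw [this]; exact Polynomial.prime_X_sub_C _

lemma not_dvd_aux (d p : R) (v : Fin 2 → ℚ) (hd : eval v d = 0) (hp : eval v p ≠ 0) :
    ¬ d ∣ p := fun h => hp (by
  have := map_dvd (eval v) h
  rw [hd] at this
  exact zero_dvd_iff.mp this)

lemma not_dvd_10 : ¬ (X 1 : R) ∣ X 0 := by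
  refine not_dvd_aux _ _ ![1, 0] (by simp) (by simp)

lemma not_dvd_sub0 : ¬ (X 0 - X 1 : R) ∣ X 0 := by
  refine not_dvd_aux _ _ ![1, 1] (by simp) (by simp)

lemma not_dvd_sub1 : ¬ (X 0 - X 1 : R) ∣ X 1 := by
  refine not_dvd_aux _ _ ![1, 1] (by simp) (by simp)

/-- The numerator polynomial for the `a = 0` case. -/
def Npoly (b : ℕ) : R :=
  (X 0 ^ 2 + X 1 ^ 2) ^ b * (X 0 - X 1)
    + (X 0 ^ 2 + (X 1 - X 0) ^ 2) ^ b * X 1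
    - (X 1 ^ 2 + (X 0 - X 1) ^ 2) ^ b * X 0

lemma dvd0 (b : ℕ) : (X 0 : R) ∣ Npoly b := by
  rw [← Ideal.Quotient.eq_zero_iff_dvd]
  have h0 : Ideal.Quotient.mk (Ideal.span {(X 0 : R)}) (X 0) = 0 :=
    Ideal.Quotient.mk_singleton_self _
  simp only [Npoly, map_add, map_sub, map_mul, map_pow, h0]
  ring

lemma dvd1 (b : ℕ) : (X 1 : R) ∣ Npoly b := by
  rw [← Ideal.Quotient.eq_zero_iff_dvd]
  have h0 : Ideal.Quotient.mk (Ideal.span {(X 1 : R)}) (X 1) = 0 :=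
    Ideal.Quotient.mk_singleton_self _
  simp only [Npoly, map_add, map_sub, map_mul, map_pow, h0]
  ring

lemma dvdsub (b : ℕ) : (X 0 - X 1 : R) ∣ Npoly b := by
  rw [← Ideal.Quotient.eq_zero_iff_dvd]
  have h0 : Ideal.Quotient.mk (Ideal.span {(X 0 - X 1 : R)}) (X 0)
      = Ideal.Quotient.mk (Ideal.span {(X 0 - X 1 : R)}) (X 1) := by
    rw [← sub_eq_zero, ← map_sub]
    exact Ideal.Quotient.mk_singleton_self _
  simp only [Npoly, map_add, map_sub, map_mul, map_pow, h0]
  ring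

lemma full_dvd (b : ℕ) : ∃ M : R, Npoly b = X 0 * X 1 * (X 0 - X 1) * M := by
  obtain ⟨m, hm⟩ := dvd0 b
  have h1 : (X 1 : R) ∣ m :=
    (primeX1.dvd_or_dvd (hm ▸ dvd1 b)).resolve_left not_dvd_10
  obtain ⟨m', hm'⟩ := h1
  have h2 : (X 0 - X 1 : R) ∣ X 0 * (X 1 * m') := by
    rw [← hm', ← hm]; exact dvdsub b
  have h3 : (X 0 - X 1 : R) ∣ m' := by
    rcases primeX01.dvd_or_dvd h2 with h | h
    · exact absurd h not_dvd_sub0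
    · rcases primeX01.dvd_or_dvd h with h | h
      · exact absurd h not_dvd_sub1
      · exact h
  obtain ⟨M, hM⟩ := h3
  exact ⟨M, by rw [hm, hm', hM]; ring⟩

lemma hx1 : (x₁ : K) ≠ 0 := by
  simp only [x₁, ne_eq, IsFractionRing.to_map_eq_zero_iff]
  exact primeX0.ne_zero

lemma hx2 : (x₂ : K) ≠ 0 := by
  simp only [x₂, ne_eq, IsFractionRing.to_map_eq_zero_iff]
  exact primeX1.ne_zero

lemma hx12 : (x₁ - x₂ : K) ≠ 0 := by
  have : (x₁ - x₂ : K) = algebraMap R K (X 0 - X 1) := by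
    rw [map_sub]; rfl
  rw [this, ne_eq, IsFractionRing.to_map_eq_zero_iff]
  exact primeX01.ne_zero

/-- When expanded out, `F_{a,b}` is a polynomial in `x₁` and `x₂`: it lies in the image of
`ℚ[x₁,x₂]` inside its fraction field `K`. -/
theorem stmt1 (a b : ℕ) : F a b ∈ (algebraMap R K).range := by
  have h1 : (x₁ * x₂ : K) ≠ 0 := mul_ne_zero hx1 hx2
  have h2 : (x₁ ^ 2 - x₁ * x₂ : K) ≠ 0 := by
    have : (x₁ ^ 2 - x₁ * x₂ : K) = x₁ * (x₁ - x₂) := by ring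
    rw [this]; exact mul_ne_zero hx1 hx12
  have h3 : (x₂ ^ 2 - x₁ * x₂ : K) ≠ 0 := by
    have : (x₂ ^ 2 - x₁ * x₂ : K) = -(x₂ * (x₁ - x₂)) := by ring
    rw [this]; exact neg_ne_zero.mpr (mul_ne_zero hx2 hx12)
  cases a with
  | succ n =>
    refine ⟨(X 0 * X 1) ^ n * (X 0 ^ 2 + X 1 ^ 2) ^ b
        + (X 0 ^ 2 - X 0 * X 1) ^ n * (X 0 ^ 2 + (X 1 - X 0) ^ 2) ^ b
        + (X 1 ^ 2 - X 0 * X 1) ^ n * (X 1 ^ 2 + (X 0 - X 1) ^ 2) ^ b, ?_⟩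
    simp only [map_add, map_sub, map_mul, map_pow]
    show (x₁ * x₂) ^ n * (x₁ ^ 2 + x₂ ^ 2) ^ b
        + (x₁ ^ 2 - x₁ * x₂) ^ n * (x₁ ^ 2 + (x₂ - x₁) ^ 2) ^ b
        + (x₂ ^ 2 - x₁ * x₂) ^ n * (x₂ ^ 2 + (x₁ - x₂) ^ 2) ^ b = F (n + 1) b
    rw [F]
    have := hx1; have := hx2; have := hx12; have := sub_ne_zero.mpr (Ne.symm (sub_ne_zero.mp hx12))
    field_simp
    ring
  | zero =>
    obtain ⟨M, hM⟩ := full_dvd b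
    refine ⟨M, ?_⟩
    have hNK : algebraMap R K (Npoly b)
        = (x₁ ^ 2 + x₂ ^ 2) ^ b * (x₁ - x₂) + (x₁ ^ 2 + (x₂ - x₁) ^ 2) ^ b * x₂
          - (x₂ ^ 2 + (x₁ - x₂) ^ 2) ^ b * x₁ := by
      simp only [Npoly, map_add, map_sub, map_mul, map_pow]
      rfl
    have hNK2 : algebraMap R K (Npoly b)
        = (x₁ * x₂ * (x₁ - x₂)) * algebraMap R K M := by
      rw [hM]
      simp only [map_mul, map_sub]
      rfl
    have key : F 0 b * (x₁ * x₂ * (x₁ - x₂)) = algebraMap R K (Npoly b) := by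
      rw [hNK, F]
      have := hx1; have := hx2; have := hx12; have := sub_ne_zero.mpr (Ne.symm (sub_ne_zero.mp hx12))
      field_simp
      ring
    rw [hNK2] at key
    have hd : (x₁ * x₂ * (x₁ - x₂) : K) ≠ 0 := mul_ne_zero h1 hx12
    rw [mul_comm (F 0 b)] at key
    exact (mul_left_cancel₀ hd key).symm

end
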